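/- Let (W,S) be a Coxeter system, x ∈ W and s ∈ S with x < xs. Then in the Hecke algebra, b_x · b_s = b_{xs} + Σ_{y : ys < y} μ(y,x) · b_y, where the sum is over y ∈ W with ys < y. -/

import Mathlib

/-!  Setup: the Hecke algebra of an arbitrary Coxeter system, its bar involution,
its Kazhdan–Lusztig basis, and (inverse) Kazhdan–Lusztig polynomials.  -/

noncomputable section

open LaurentPolynomial

namespace KLMonotonicity

/-- Coefficient-wise inequality `p ⪯ q` of Laurent polynomials in `v`:
`q - p` has non-negative coefficients. -/
def CoeffLE (p q : LaurentPolynomial ℤ) : Prop := ∀ n : ℤ, p.coeff n ≤ q.coeff n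

/-- `p ∈ v·ℤ[v]`, i.e. all monomials of `p` have strictly positive degree. -/
def MemVZv (p : LaurentPolynomial ℤ) : Prop := ∀ n : ℤ, n ≤ 0 → p.coeff n = 0

variable {B W : Type} [Group W] {M : CoxeterMatrix B}

/-- The Bruhat order on a Coxeter group: the reflexive-transitive closure of the
relation `a → a·t` for `t` a reflection with `ℓ(a) < ℓ(a·t)`. -/
def BruhatLE (cs : CoxeterSystem M W) : W → W → Prop :=
  Relation.ReflTransGen fun a b =>
    (∃ t : W, cs.IsReflection t ∧ b = a * t) ∧ cs.length a < cs.length b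

/-- The strict Bruhat order. -/
def BruhatLT (cs : CoxeterSystem M W) (a b : W) : Prop := BruhatLE cs a b ∧ a ≠ b

/-- The data of (a realisation of) the Hecke algebra of the Coxeter system `cs` on
a `ℤ[v,v⁻¹]`-algebra `H`: a standard basis `δ` indexed by `W`, satisfying the
quadratic relations `(δ_s + v)(δ_s - v⁻¹) = 0` for each simple reflection `s` and
the relations `δ_x · δ_y = δ_{xy}` whenever `ℓ(x) + ℓ(y) = ℓ(xy)`.  These
relations determine the multiplication of `H` completely, so any such `H` *is*
the Hecke algebra of `(W,S)`.  Here `v = T 1` and `v⁻¹ = T (-1)`. -/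
structure HeckeAlgebra (cs : CoxeterSystem M W) (H : Type)
    [Ring H] [Algebra (LaurentPolynomial ℤ) H] where
  /-- the standard basis `{δ_x | x ∈ W}` -/
  δ : Module.Basis W (LaurentPolynomial ℤ) H
  quadratic : ∀ i : B,
    (δ (cs.simple i) + algebraMap (LaurentPolynomial ℤ) H (T 1)) *
      (δ (cs.simple i) - algebraMap (LaurentPolynomial ℤ) H (T (-1))) = 0
  mul_of_length_add : ∀ x y : W, cs.length x + cs.length y = cs.length (x * y) →
    δ x * δ y = δ (x * y)

variable {cs : CoxeterSystem M W} {H : Type} [Ring H] [Algebra (LaurentPolynomial ℤ) H]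

/-- The bar involution of the Hecke algebra: the unique ring involution which is
semilinear over `v ↦ v⁻¹` and sends `δ_x` to `(δ_{x⁻¹})⁻¹`. -/
structure BarInvolution (A : HeckeAlgebra cs H) where
  bar : H ≃+* H
  bar_bar : ∀ h : H, bar (bar h) = h
  bar_smul : ∀ (p : LaurentPolynomial ℤ) (h : H), bar (p • h) = (invert p) • bar h
  bar_δ_mul : ∀ x : W, bar (A.δ x) * A.δ x⁻¹ = 1
  mul_bar_δ : ∀ x : W, A.δ x⁻¹ * bar (A.δ x) = 1

/-- The data of the Kazhdan–Lusztig basis `{b_x | x ∈ W}`: it is bar-invariant and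
`b_x ∈ δ_x + Σ_{y < x} v ℤ[v] · δ_y`.  These conditions determine `b` uniquely. -/
structure KLBasis (A : HeckeAlgebra cs H) (bar : BarInvolution A) where
  b : W → H
  selfDual : ∀ x : W, bar.bar (b x) = b x
  repr_self : ∀ x : W, A.δ.repr (b x) x = 1
  repr_lt : ∀ x y : W, y ≠ x → A.δ.repr (b x) y ≠ 0 → BruhatLT cs y x
  repr_mem : ∀ x y : W, y ≠ x → MemVZv (A.δ.repr (b x) y)

/-- The Kazhdan–Lusztig polynomial `h_{y,x}`, defined by `b_x = Σ_y h_{y,x} δ_y`. -/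
def KLBasis.h {A : HeckeAlgebra cs H} {bar : BarInvolution A} (KL : KLBasis A bar)
    (y x : W) : LaurentPolynomial ℤ := A.δ.repr (KL.b x) y

/-- `μ(y,x)`: the coefficient of `v` in the Kazhdan–Lusztig polynomial `h_{y,x}`. -/
def KLBasis.mu {A : HeckeAlgebra cs H} {bar : BarInvolution A} (KL : KLBasis A bar)
    (y x : W) : ℤ := (KL.h y x).coeff 1

/-- `hinv` is the family of inverse Kazhdan–Lusztig polynomials `h^{y,x}` for the
Kazhdan–Lusztig basis `b`, i.e. `δ_x = Σ_y (-1)^{ℓ(x) - ℓ(y)} h^{y,x} b_y`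
(note `(-1)^{ℓ(x) - ℓ(y)} = (-1)^{ℓ(x) + ℓ(y)}`), the sum being finite. -/
def IsInverseKL (A : HeckeAlgebra cs H) (b : W → H)
    (hinv : W → W → LaurentPolynomial ℤ) : Prop :=
  ∀ x : W, (Function.support fun y => hinv y x).Finite ∧
    A.δ x = ∑ᶠ y : W,
      (((-1 : LaurentPolynomial ℤ) ^ (cs.length x + cs.length y)) * hinv y x) • b y

/-! Modulo `v ℤ[v]`, the coefficient of `b_x b_s - Σ_{ys < y} μ(y,x) b_y` at `δ_w` is `1` for
`w = xs` and `0` otherwise: right multiplication by `b_s = δ_s + v` sends `δ_w` to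
`δ_{ws} + v^{±1} δ_w`, and the only contribution of degree `≤ 0` left over, the constant term
`μ(w,x)` of `v⁻¹ h_{w,x}` for `ws < w`, is cancelled by the sum. The element is bar-invariant, so
it is `b_{xs}` by uniqueness of the Kazhdan–Lusztig basis: a bar-invariant element with all
coefficients in `v ℤ[v]` vanishes, since the bar involution is unitriangular on the standard basis
with respect to length. -/

lemma BruhatLE.length_le {a b : W} (h : BruhatLE cs a b) : cs.length a ≤ cs.length b := by
  induction h with
  | refl => exact le_rfl
  | tail _ hstep ih => exact ih.trans hstep.2.le

lemma BruhatLT.length_lt {a b : W} (h : BruhatLT cs a b) : cs.length a < cs.length b := by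
  obtain ⟨hle, hne⟩ := h
  rcases hle.cases_tail with rfl | ⟨c, hac, hcb⟩
  · exact absurd rfl hne
  · exact (BruhatLE.length_le hac).trans_lt hcb.2

lemma bruhatLT_mul_simple_self_iff (w : W) (i : B) :
    BruhatLT cs (w * cs.simple i) w ↔ cs.length (w * cs.simple i) < cs.length w := by
  refine ⟨BruhatLT.length_lt, fun h => ⟨.single ⟨⟨cs.simple i, cs.isReflection_simple i, ?_⟩, h⟩,
    fun he => (he ▸ h).false⟩⟩
  simp

def vZv : AddSubgroup (LaurentPolynomial ℤ) where
  carrier := {p | MemVZv p}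
  add_mem' {p q} hp hq n hn := by
    simp [AddMonoidAlgebra.coeff_add, hp n hn, hq n hn]
  zero_mem' _ _ := rfl
  neg_mem' {p} hp n hn := by
    simp [AddMonoidAlgebra.coeff_neg, hp n hn]

lemma eq_zero_of_mem_vZv_of_invert_eq {p : LaurentPolynomial ℤ} (hp : p ∈ vZv)
    (hinv : invert p = p) : p = 0 := by
  ext n
  rcases le_or_gt n 0 with hn | hn
  · exact hp n hn
  · rw [← hinv, invert_apply]
    exact hp (-n) (by omega)

lemma coeff_T_mul (k n : ℤ) (p : LaurentPolynomial ℤ) : (T k * p).coeff n = p.coeff (n - k) := by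
  rw [show (T k : LaurentPolynomial ℤ) = AddMonoidAlgebra.single k 1 from rfl,
    AddMonoidAlgebra.coeff_single_mul_apply, one_mul, neg_add_eq_sub]

lemma T_one_mem_vZv : (T 1 : LaurentPolynomial ℤ) ∈ vZv := fun n hn => by
  rw [T_apply, if_neg (by omega)]

lemma T_one_mul_mem_vZv {p : LaurentPolynomial ℤ} (hp : ∀ n < 0, p.coeff n = 0) :
    T 1 * p ∈ vZv := fun n hn => by
  rw [coeff_T_mul]
  exact hp _ (by omega)

lemma T_neg_one_mul_sub_mem_vZv {p : LaurentPolynomial ℤ} (hp : p ∈ vZv) :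
    T (-1) * p - p.coeff 1 • 1 ∈ vZv := fun n hn => by
  simp only [AddMonoidAlgebra.coeff_sub, AddMonoidAlgebra.coeff_smul, Finsupp.sub_apply,
    Finsupp.smul_apply, coeff_T_mul]
  rcases hn.lt_or_eq with hn | rfl
  · simp [hp (n + 1) (by omega), ← T_zero, T_apply, hn.ne']
  · simp

variable {A : HeckeAlgebra cs H} {bar : BarInvolution A}

namespace HeckeAlgebra

variable (A)

lemma δ_one : A.δ 1 = 1 := by
  have hmul : LinearMap.mulLeft (LaurentPolynomial ℤ) (A.δ 1) = LinearMap.id :=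
    A.δ.ext fun w => by simpa using A.mul_of_length_add 1 w (by simp)
  simpa using congr($hmul 1)

lemma δ_simple_mul_self (i : B) :
    A.δ (cs.simple i) * A.δ (cs.simple i) =
      1 + (T (-1) - T 1 : LaurentPolynomial ℤ) • A.δ (cs.simple i) := by
  set a := A.δ (cs.simple i)
  set v := algebraMap (LaurentPolynomial ℤ) H (T 1)
  set v' := algebraMap (LaurentPolynomial ℤ) H (T (-1))
  have hvv' : v * v' = 1 := by
    rw [← map_mul, ← T_add, add_neg_cancel, T_zero, map_one]
  have hcomm : a * v' = v' * a := (Algebra.commutes _ _).symm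
  rw [Algebra.smul_def, map_sub, ← sub_eq_zero]
  calc a * a - (1 + (v' - v) * a) = (a + v) * (a - v') + (v * v' - 1) + (a * v' - v' * a) := by
        noncomm_ring
    _ = 0 := by rw [A.quadratic i, hvv', hcomm]; abel

lemma δ_mul_δ_simple_of_not_isRightDescent {w : W} {i : B} (hw : ¬cs.IsRightDescent w i) :
    A.δ w * A.δ (cs.simple i) = A.δ (w * cs.simple i) :=
  A.mul_of_length_add _ _ (by rw [cs.length_simple, cs.not_isRightDescent_iff.mp hw])

lemma δ_mul_δ_simple_of_isRightDescent {w : W} {i : B} (hw : cs.IsRightDescent w i) :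
    A.δ w * A.δ (cs.simple i) =
      A.δ (w * cs.simple i) + (T (-1) - T 1 : LaurentPolynomial ℤ) • A.δ w := by
  have hw' : A.δ (w * cs.simple i) * A.δ (cs.simple i) = A.δ w := by
    rw [A.δ_mul_δ_simple_of_not_isRightDescent (by simp [cs.not_isRightDescent_iff,
      cs.isRightDescent_iff.mp hw]), cs.simple_mul_simple_cancel_right]
  rw [← hw', mul_assoc, δ_simple_mul_self, mul_add, mul_one, mul_smul_comm]

def lowerSpan (n : ℕ) : Submodule (LaurentPolynomial ℤ) H :=
  Submodule.span _ (A.δ '' {w | cs.length w < n})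

variable {A}

lemma δ_mem_lowerSpan {w : W} {n : ℕ} (hw : cs.length w < n) : A.δ w ∈ A.lowerSpan n :=
  Submodule.subset_span ⟨w, hw, rfl⟩

lemma lowerSpan_mono {m n : ℕ} (hmn : m ≤ n) : A.lowerSpan m ≤ A.lowerSpan n :=
  Submodule.span_mono (Set.image_mono fun _ hw => lt_of_lt_of_le hw hmn)

lemma repr_eq_zero_of_mem_lowerSpan {n : ℕ} {h : H} (hh : h ∈ A.lowerSpan n) {w : W}
    (hw : n ≤ cs.length w) : A.δ.repr h w = 0 :=
  Finsupp.notMem_support_iff.mp fun hmem => (A.δ.mem_span_image.mp hh hmem).not_ge hw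

lemma mul_δ_simple_mem_lowerSpan {n : ℕ} {h : H} (hh : h ∈ A.lowerSpan n) (i : B) :
    h * A.δ (cs.simple i) ∈ A.lowerSpan (n + 1) := by
  suffices A.lowerSpan n ≤ (A.lowerSpan (n + 1)).comap
      (LinearMap.mulRight (LaurentPolynomial ℤ) (A.δ (cs.simple i))) from this hh
  refine Submodule.span_le.mpr ?_
  rintro _ ⟨w, hw, rfl⟩
  simp only [Set.mem_ofPred_eq] at hw
  simp only [SetLike.mem_coe, Submodule.mem_comap, LinearMap.mulRight_apply]
  by_cases hdesc : cs.IsRightDescent w i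
  · rw [A.δ_mul_δ_simple_of_isRightDescent hdesc]
    exact add_mem (δ_mem_lowerSpan (by unfold CoxeterSystem.IsRightDescent at hdesc; omega))
      (Submodule.smul_mem _ _ (δ_mem_lowerSpan (by omega)))
  · rw [A.δ_mul_δ_simple_of_not_isRightDescent hdesc]
    exact δ_mem_lowerSpan (by rw [cs.not_isRightDescent_iff.mp hdesc]; omega)

end HeckeAlgebra

namespace BarInvolution

variable (bar)

lemma bar_δ_simple (i : B) :
    bar.bar (A.δ (cs.simple i)) = A.δ (cs.simple i) + (T 1 - T (-1) : LaurentPolynomial ℤ) • 1 := by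
  have hleft : bar.bar (A.δ (cs.simple i)) * A.δ (cs.simple i) = 1 := by
    simpa using bar.bar_δ_mul (cs.simple i)
  have hright : A.δ (cs.simple i) *
      (A.δ (cs.simple i) + (T 1 - T (-1) : LaurentPolynomial ℤ) • 1) = 1 := by
    rw [mul_add, A.δ_simple_mul_self, mul_smul_comm, mul_one, add_assoc, ← add_smul]
    simp
  calc bar.bar (A.δ (cs.simple i))
      = bar.bar (A.δ (cs.simple i)) *
          (A.δ (cs.simple i) * (A.δ (cs.simple i) + (T 1 - T (-1) : LaurentPolynomial ℤ) • 1)) := by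
        rw [hright, mul_one]
    _ = _ := by rw [← mul_assoc, hleft, one_mul]

lemma bar_δ_sub_δ_mem_lowerSpan (x : W) :
    bar.bar (A.δ x) - A.δ x ∈ A.lowerSpan (cs.length x) := by
  induction hn : cs.length x generalizing x with
  | zero =>
    rw [cs.length_eq_zero_iff.mp hn, A.δ_one, map_one, sub_self]
    exact zero_mem _
  | succ n ih =>
    obtain ⟨i, hi⟩ := cs.exists_rightDescent_of_ne_one (w := x) (by rintro rfl; simp at hn)
    have hy : cs.length (x * cs.simple i) = n := by have := cs.isRightDescent_iff.mp hi; omega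
    set y := x * cs.simple i
    have hx : A.δ x = A.δ y * A.δ (cs.simple i) := by
      rw [A.δ_mul_δ_simple_of_not_isRightDescent (by simp [y, cs.not_isRightDescent_iff, hy, hn]),
        cs.simple_mul_simple_cancel_right]
    set E := bar.bar (A.δ y) - A.δ y
    have hE : E ∈ A.lowerSpan n := ih y hy
    have hbar : bar.bar (A.δ x) - A.δ x =
        E * A.δ (cs.simple i) + (T 1 - T (-1) : LaurentPolynomial ℤ) • (A.δ y + E) := by
      rw [hx, map_mul, bar.bar_δ_simple, show bar.bar (A.δ y) = A.δ y + E by simp [E]]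
      simp only [add_mul, mul_add, mul_smul_comm, mul_one]
      abel
    rw [hbar]
    exact add_mem (HeckeAlgebra.mul_δ_simple_mem_lowerSpan hE i) (Submodule.smul_mem _ _
      (add_mem (HeckeAlgebra.δ_mem_lowerSpan (by omega))
        (HeckeAlgebra.lowerSpan_mono (by omega) hE)))

lemma repr_bar_δ_of_length_le {w y : W} (hwy : cs.length w ≤ cs.length y) :
    A.δ.repr (bar.bar (A.δ w)) y = Finsupp.single w 1 y := by
  have := HeckeAlgebra.repr_eq_zero_of_mem_lowerSpan (bar.bar_δ_sub_δ_mem_lowerSpan w) hwy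
  rwa [map_sub, Finsupp.sub_apply, sub_eq_zero, A.δ.repr_self] at this

lemma repr_bar_of_forall_length_le {h : H} {y : W}
    (hy : ∀ w ∈ (A.δ.repr h).support, cs.length w ≤ cs.length y) :
    A.δ.repr (bar.bar h) y = invert (A.δ.repr h y) := by
  conv_lhs => rw [← A.δ.linearCombination_repr h]
  simp only [Finsupp.linearCombination_apply, Finsupp.sum, map_sum, bar.bar_smul, map_smul,
    Finsupp.finsetSum_apply, Finsupp.smul_apply]
  rw [Finset.sum_eq_single y]
  · simp [bar.repr_bar_δ_of_length_le le_rfl]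
  · intro w hw hwy
    simp [bar.repr_bar_δ_of_length_le (hy w hw), hwy]
  · intro hy'
    simp [Finsupp.notMem_support_iff.mp hy']

/-- At a coefficient of maximal length the bar involution acts as `invert`, which fixes no
nonzero element of `v ℤ[v]`. -/
lemma eq_zero_of_bar_eq_self {h : H} (hbar : bar.bar h = h)
    (hmem : ∀ w, A.δ.repr h w ∈ vZv) : h = 0 := by
  by_contra hne
  obtain ⟨y, hy, hmax⟩ := (A.δ.repr h).support.exists_max_image cs.length
    (Finsupp.support_nonempty_iff.mpr (by simpa using hne))
  have hinv := bar.repr_bar_of_forall_length_le hmax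
  rw [hbar] at hinv
  exact Finsupp.mem_support_iff.mp hy (eq_zero_of_mem_vZv_of_invert_eq (hmem y) hinv.symm)

end BarInvolution

namespace KLBasis

variable (KL : KLBasis A bar)

lemma h_self (x : W) : KL.h x x = 1 := KL.repr_self x

lemma h_mem_vZv {y x : W} (hyx : y ≠ x) : KL.h y x ∈ vZv := KL.repr_mem x y hyx

lemma coeff_h_of_neg (y x : W) {n : ℤ} (hn : n < 0) : (KL.h y x).coeff n = 0 := by
  by_cases hyx : y = x
  · simp [hyx, h_self, ← T_zero, T_apply, hn.ne']
  · exact KL.h_mem_vZv hyx n hn.le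

lemma repr_b_sub_δ_mem_vZv (x y : W) : A.δ.repr (KL.b x - A.δ x) y ∈ vZv := by
  by_cases hyx : y = x
  · simp [hyx, KL.repr_self]
  · rw [map_sub, Finsupp.sub_apply, A.δ.repr_self, Finsupp.single_eq_of_ne hyx, sub_zero]
    exact KL.h_mem_vZv hyx

lemma length_le_of_mem_support {x y : W} (hy : y ∈ (A.δ.repr (KL.b x)).support) :
    cs.length y ≤ cs.length x := by
  by_cases hyx : y = x
  · rw [hyx]
  · exact (KL.repr_lt x y hyx (Finsupp.mem_support_iff.mp hy)).length_lt.le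

lemma mu_eq_zero_of_notMem_support {x y : W} (hy : y ∉ (A.δ.repr (KL.b x)).support) :
    KL.mu y x = 0 := by
  simp [KLBasis.mu, KLBasis.h, Finsupp.notMem_support_iff.mp hy]

lemma h_eq_zero_of_length_lt {y x : W} (hxy : cs.length x < cs.length y) : KL.h y x = 0 :=
  Finsupp.notMem_support_iff.mp fun hy => (KL.length_le_of_mem_support hy).not_gt hxy

lemma eq_b_of_bar_eq_self {x : W} {c : H} (hbar : bar.bar c = c) (hx : A.δ.repr c x = 1)
    (hmem : ∀ w ≠ x, A.δ.repr c w ∈ vZv) : KL.b x = c := by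
  refine sub_eq_zero.mp
    (bar.eq_zero_of_bar_eq_self (by rw [map_sub, KL.selfDual, hbar]) fun w => ?_)
  rw [map_sub, Finsupp.sub_apply]
  by_cases hw : w = x
  · rw [hw, KL.repr_self, hx, sub_self]
    exact zero_mem _
  · exact sub_mem (KL.repr_mem x w hw) (hmem w hw)

lemma b_simple (i : B) :
    KL.b (cs.simple i) = A.δ (cs.simple i) + (T 1 : LaurentPolynomial ℤ) • 1 := by
  have hs : cs.simple i ≠ 1 := fun h => by simpa [h] using cs.length_simple i
  refine KL.eq_b_of_bar_eq_self ?_ ?_ fun w hw => ?_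
  · rw [map_add, bar.bar_δ_simple, bar.bar_smul, map_one, invert_T, add_assoc, ← add_smul,
      sub_add_cancel]
  · simp [← A.δ_one, hs]
  · by_cases hw1 : w = 1
    · simpa [← A.δ_one, Finsupp.single_apply, hw1, hs.symm] using T_one_mem_vZv
    · simp [← A.δ_one, Ne.symm hw, Ne.symm hw1, zero_mem]

lemma δ_mul_b_simple (w : W) (i : B) :
    A.δ w * KL.b (cs.simple i) = A.δ (w * cs.simple i) +
      (T (if cs.length (w * cs.simple i) < cs.length w then -1 else 1) : LaurentPolynomial ℤ) •
        A.δ w := by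
  rw [KL.b_simple, mul_add, mul_smul_comm, mul_one]
  split_ifs with hw
  · rw [A.δ_mul_δ_simple_of_isRightDescent hw, add_assoc, ← add_smul, sub_add_cancel]
  · rw [A.δ_mul_δ_simple_of_not_isRightDescent hw]

lemma sum_zsmul_h_sub_mem_vZv {S : Finset W} {m : W → ℤ} (hm : ∀ y ∉ S, m y = 0) (w : W) :
    ∑ y ∈ S, m y • KL.h w y - m w • 1 ∈ vZv := by
  have hdiag : ∑ y ∈ S, m y • A.δ.repr (A.δ y) w = m w • 1 := by
    rw [Finset.sum_eq_single w (fun y _ hyw => by simp [Finsupp.single_eq_of_ne' hyw])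
      (fun hw => by simp [hm w hw])]
    simp
  rw [← hdiag, ← Finset.sum_sub_distrib]
  refine sum_mem fun y _ => ?_
  rw [← smul_sub, KLBasis.h, ← Finsupp.sub_apply, ← map_sub]
  exact zsmul_mem (KL.repr_b_sub_δ_mem_vZv y w) _

lemma repr_mul_b_simple (h : H) (w : W) (i : B) :
    A.δ.repr (h * KL.b (cs.simple i)) w = A.δ.repr h (w * cs.simple i) +
      (T (if cs.length (w * cs.simple i) < cs.length w then -1 else 1) : LaurentPolynomial ℤ) *
        A.δ.repr h w := by
  have hlin : Finsupp.lapply w ∘ₗ A.δ.repr.toLinearMap ∘ₗ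
        LinearMap.mulRight (LaurentPolynomial ℤ) (KL.b (cs.simple i)) =
      Finsupp.lapply (w * cs.simple i) ∘ₗ A.δ.repr.toLinearMap +
        (T (if cs.length (w * cs.simple i) < cs.length w then -1 else 1) : LaurentPolynomial ℤ) •
          (Finsupp.lapply w ∘ₗ A.δ.repr.toLinearMap) := by
    refine A.δ.ext fun y => ?_
    have hiff : y * cs.simple i = w ↔ y = w * cs.simple i :=
      ⟨by rintro rfl; simp, by rintro rfl; simp⟩
    have hsingle : Finsupp.single (y * cs.simple i) (1 : LaurentPolynomial ℤ) w =
        Finsupp.single y 1 (w * cs.simple i) := by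
      classical simp only [Finsupp.single_apply, hiff]
    by_cases hyw : y = w
    · subst hyw
      simp [KL.δ_mul_b_simple, hsingle]
    · simp [KL.δ_mul_b_simple, hsingle, Finsupp.single_eq_of_ne' hyw]
  simpa using congr($hlin h)

lemma T_mul_h_sub_mem_vZv {x : W} {i : B} (hx : cs.length x < cs.length (x * cs.simple i))
    (w : W) :
    (T (if cs.length (w * cs.simple i) < cs.length w then -1 else 1) : LaurentPolynomial ℤ) *
      KL.h w x -
      (if cs.length (w * cs.simple i) < cs.length w then KL.mu w x else 0) • 1 ∈ vZv := by
  split_ifs with hw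
  · exact T_neg_one_mul_sub_mem_vZv (KL.h_mem_vZv (by rintro rfl; omega))
  · rw [zero_smul, sub_zero]
    exact T_one_mul_mem_vZv fun n hn => KL.coeff_h_of_neg w x hn

lemma finsum_mu_smul_b (x : W) (P : W → Prop) [DecidablePred P] :
    ∑ᶠ (y : W) (_ : P y), KL.mu y x • KL.b y =
      ∑ y ∈ (A.δ.repr (KL.b x)).support, (if P y then KL.mu y x else 0) • KL.b y := by
  simp_rw [ite_smul, zero_smul, ← Finset.sum_filter]
  refine finsum_cond_eq_sum_of_cond_iff _ fun {y} hy => ?_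
  have hsupp : y ∈ (A.δ.repr (KL.b x)).support := by
    contrapose! hy
    simp [KL.mu_eq_zero_of_notMem_support hy]
  simp [hsupp]

end KLBasis

/-- If `x < xs` then `b_x · b_s = b_{xs} + Σ_{y : ys < y} μ(y,x) · b_y`. -/
theorem klBasis_mul_simple_of_lt
    {B W : Type} [Group W] {M : CoxeterMatrix B} (cs : CoxeterSystem M W)
    {H : Type} [Ring H] [Algebra (LaurentPolynomial ℤ) H]
    (A : HeckeAlgebra cs H) (bar : BarInvolution A) (KL : KLBasis A bar)
    (x : W) (i : B) (hx : BruhatLT cs x (x * cs.simple i)) :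
    KL.b x * KL.b (cs.simple i) =
      KL.b (x * cs.simple i) +
        ∑ᶠ (y : W) (_ : BruhatLT cs (y * cs.simple i) y), KL.mu y x • KL.b y := by
  have hlen : cs.length x < cs.length (x * cs.simple i) := hx.length_lt
  simp only [bruhatLT_mul_simple_self_iff]
  rw [KL.finsum_mu_smul_b]
  refine eq_add_of_sub_eq ?_
  set S := (A.δ.repr (KL.b x)).support
  set m : W → ℤ := fun y => if cs.length (y * cs.simple i) < cs.length y then KL.mu y x else 0
  have hm : ∀ y ∉ S, m y = 0 := fun y hy => by simp [m, KL.mu_eq_zero_of_notMem_support hy]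
  have hrepr (w : W) : A.δ.repr (KL.b x * KL.b (cs.simple i) - ∑ y ∈ S, m y • KL.b y) w =
      KL.h (w * cs.simple i) x +
        (T (if cs.length (w * cs.simple i) < cs.length w then -1 else 1) : LaurentPolynomial ℤ) *
          KL.h w x - ∑ y ∈ S, m y • KL.h w y := by
    simp only [map_sub, map_sum, map_zsmul, Finsupp.sub_apply, Finsupp.finsetSum_apply,
      Finsupp.smul_apply, KL.repr_mul_b_simple]
    rfl
  refine (KL.eq_b_of_bar_eq_self ?_ ?_ fun w hw => ?_).symm
  · simp only [map_sub, map_mul, map_sum, map_zsmul, KL.selfDual]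
  · rw [hrepr, cs.simple_mul_simple_cancel_right, KL.h_self, KL.h_eq_zero_of_length_lt hlen,
      Finset.sum_eq_zero fun y hy => by
        rw [KL.h_eq_zero_of_length_lt ((KL.length_le_of_mem_support hy).trans_lt hlen), smul_zero]]
    simp
  · have hws : w * cs.simple i ≠ x := by rintro rfl; simp at hw
    rw [hrepr]
    convert add_mem (KL.h_mem_vZv hws)
      (sub_mem (KL.T_mul_h_sub_mem_vZv hlen w) (KL.sum_zsmul_h_sub_mem_vZv hm w)) using 1
    abel

end KLMonotonicity
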